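/- For the pseudopure state ρ_s = p |ψ_max⟩⟨ψ_max| + (1−p) I/d, where |ψ_max⟩ = (1/√d) Σ_x e^{iθ_x}|x⟩ is a maximally coherent state and 0 ≤ p ≤ 1, the robustness of coherence equals the ℓ1-norm of coherence: R(ρ_s) = C_{ℓ1}(ρ_s) = p(d−1). -/

import Mathlib

/-!
The matrix `X = d |ψ⟩⟨ψ|` is feasible (its diagonal is `d |ψ_x|² = 1`) and gives
`Tr(ρ_s X) − 1 = p ⟨ψ|X|ψ⟩ + (1 − p) − 1 = p (d − 1)`. Conversely, every `2 × 2` principal minor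
of a positive semidefinite `X` with unit diagonal is nonnegative, so `|X_xy| ≤ 1`, and hence
`Re ⟨ψ|X|ψ⟩ ≤ (Σ_x |ψ_x|)² = d`, which bounds `Tr(ρ_s X) − 1` by the same value. The `ℓ1`-norm is
immediate, since every off-diagonal entry of `ρ_s` has modulus `p / d`.
-/

open scoped Matrix ComplexOrder

namespace Matrix

variable {n 𝕜 : Type*} [RCLike 𝕜]

theorem PosSemidef.norm_sq_apply_le {A : Matrix n n 𝕜} (hA : A.PosSemidef) (i j : n) :
    ‖A i j‖ ^ 2 ≤ RCLike.re (A i i) * RCLike.re (A j j) := by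
  have hdet := (hA.submatrix ![i, j]).det_nonneg
  rw [det_fin_two] at hdet
  simp only [submatrix_apply, cons_val_zero, cons_val_one] at hdet
  have hji : A j i = star (A i j) := (hA.isHermitian.apply j i).symm
  rw [hji, RCLike.star_def, RCLike.mul_conj] at hdet
  have hii := (RCLike.nonneg_iff.mp (hA.diag_nonneg (i := i))).2
  simpa [RCLike.mul_re, hii] using (RCLike.nonneg_iff.mp hdet).1

theorem PosSemidef.norm_apply_le_one {A : Matrix n n 𝕜} (hA : A.PosSemidef)
    (hdiag : ∀ i, A i i = 1) (i j : n) : ‖A i j‖ ≤ 1 := by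
  have h := hA.norm_sq_apply_le i j
  rw [hdiag, hdiag, RCLike.one_re, one_mul] at h
  exact (sq_le_one_iff₀ (norm_nonneg _)).mp h

variable [Fintype n]

theorem norm_star_dotProduct_mulVec_le {A : Matrix n n 𝕜} (hA : ∀ i j, ‖A i j‖ ≤ 1)
    (v : n → 𝕜) : ‖star v ⬝ᵥ A *ᵥ v‖ ≤ ∑ i, ∑ j, ‖v i‖ * ‖v j‖ := by
  simp only [dotProduct, mulVec, Finset.mul_sum]
  refine (norm_sum_le _ _).trans (Finset.sum_le_sum fun i _ => ?_)
  refine (norm_sum_le _ _).trans (Finset.sum_le_sum fun j _ => ?_)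
  rw [norm_mul, norm_mul, Pi.star_apply, norm_star]
  simpa using mul_le_mul_of_nonneg_left (mul_le_of_le_one_left (norm_nonneg _) (hA i j))
    (norm_nonneg (v i))

theorem trace_vecMulVec_star_mul (v : n → 𝕜) (A : Matrix n n 𝕜) :
    (vecMulVec v (star v) * A).trace = star v ⬝ᵥ A *ᵥ v := by
  rw [vecMulVec_mul, trace_vecMulVec, dotProduct_comm, dotProduct_mulVec]

end Matrix

open Matrix

variable {n : Type*} [Fintype n]

def IsMaximallyCoherent (ψ : n → ℂ) : Prop :=
  ∀ x, ‖ψ x‖ ^ 2 = (Fintype.card n : ℝ)⁻¹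

namespace IsMaximallyCoherent

variable {ψ : n → ℂ} (hψ : IsMaximallyCoherent ψ)
include hψ

theorem norm_mul_norm (x y : n) : ‖ψ x‖ * ‖ψ y‖ = (Fintype.card n : ℝ)⁻¹ := by
  rw [← sq_eq_sq₀ (by positivity) (by positivity), mul_pow, hψ x, hψ y, sq]

theorem sum_sum_norm_mul_norm : ∑ x, ∑ y, ‖ψ x‖ * ‖ψ y‖ = Fintype.card n := by
  simp [hψ.norm_mul_norm, ← mul_assoc, mul_self_mul_inv]

theorem star_dotProduct_self [Nonempty n] : star ψ ⬝ᵥ ψ = 1 := by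
  simp [dotProduct, Complex.conj_mul', ← Complex.ofReal_pow, hψ _]

end IsMaximallyCoherent

/-- The values `Tr(ρX) − 1` of the semidefinite program whose maximum is the robustness of
coherence `R(ρ)`. -/
def robustnessValues (ρ : Matrix n n ℂ) : Set ℝ :=
  {s | ∃ X : Matrix n n ℂ, X.PosSemidef ∧ (∀ x, X x x = 1) ∧ (s : ℂ) = (ρ * X).trace - 1}

variable [DecidableEq n]

noncomputable def l1Coherence (ρ : Matrix n n ℂ) : ℝ :=
  ∑ x, ∑ y, if x ≠ y then ‖ρ x y‖ else 0

noncomputable def pseudopure (p : ℝ) (ψ : n → ℂ) : Matrix n n ℂ :=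
  (p : ℂ) • vecMulVec ψ (star ψ) + ((1 - p : ℝ) : ℂ) • ((Fintype.card n : ℂ)⁻¹ • 1)

theorem trace_pseudopure_mul [Nonempty n] (p : ℝ) (ψ : n → ℂ) {X : Matrix n n ℂ}
    (hX : ∀ x, X x x = 1) :
    (pseudopure p ψ * X).trace = p * (star ψ ⬝ᵥ X *ᵥ ψ) + (1 - p : ℝ) := by
  have htr : X.trace = Fintype.card n := by simp [trace, hX]
  have hcard : (Fintype.card n : ℂ) ≠ 0 := by simp
  rw [pseudopure, add_mul, smul_mul, smul_mul, smul_mul, one_mul, trace_add, trace_smul,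
    trace_smul, trace_smul, trace_vecMulVec_star_mul, htr, smul_eq_mul, smul_eq_mul, smul_eq_mul,
    inv_mul_cancel₀ hcard, mul_one]

theorem norm_pseudopure_apply_of_ne {p : ℝ} (hp : 0 ≤ p) {ψ : n → ℂ}
    (hψ : IsMaximallyCoherent ψ) {x y : n} (hxy : x ≠ y) :
    ‖pseudopure p ψ x y‖ = p / Fintype.card n := by
  simp [pseudopure, hxy, vecMulVec_apply, hψ.norm_mul_norm, abs_of_nonneg hp, div_eq_mul_inv]

theorem isGreatest_robustness_pseudopure [Nonempty n] {p : ℝ} (hp : 0 ≤ p) {ψ : n → ℂ}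
    (hψ : IsMaximallyCoherent ψ) :
    IsGreatest (robustnessValues (pseudopure p ψ)) (p * (Fintype.card n - 1)) := by
  constructor
  · have hdiag : ∀ x, ((Fintype.card n : ℂ) • vecMulVec ψ (star ψ)) x x = 1 := fun x => by
      simp [vecMulVec_apply, Complex.mul_conj', ← Complex.ofReal_pow, hψ x]
    refine ⟨_, (posSemidef_vecMulVec_self_star ψ).smul (by positivity), hdiag, ?_⟩
    rw [trace_pseudopure_mul p ψ hdiag, smul_mulVec, vecMulVec_mulVec, hψ.star_dotProduct_self,
      MulOpposite.op_one, one_smul, dotProduct_smul, hψ.star_dotProduct_self, smul_eq_mul, mul_one]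
    push_cast
    ring
  · rintro s ⟨X, hX, hdiag, hs⟩
    have hs_re : s = p * (star ψ ⬝ᵥ X *ᵥ ψ).re + (1 - p) - 1 := by
      simpa [trace_pseudopure_mul p ψ hdiag, Complex.re_ofReal_mul] using congrArg Complex.re hs
    have hquad : (star ψ ⬝ᵥ X *ᵥ ψ).re ≤ Fintype.card n := calc
      _ ≤ ‖star ψ ⬝ᵥ X *ᵥ ψ‖ := Complex.re_le_norm _
      _ ≤ ∑ x, ∑ y, ‖ψ x‖ * ‖ψ y‖ :=
        norm_star_dotProduct_mulVec_le (hX.norm_apply_le_one hdiag) ψ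
      _ = Fintype.card n := hψ.sum_sum_norm_mul_norm
    rw [hs_re]
    linarith [mul_le_mul_of_nonneg_left hquad hp]

theorem l1Coherence_pseudopure [Nonempty n] {p : ℝ} (hp : 0 ≤ p) {ψ : n → ℂ}
    (hψ : IsMaximallyCoherent ψ) : l1Coherence (pseudopure p ψ) = p * (Fintype.card n - 1) := by
  have hterm : ∀ x y, (if x ≠ y then ‖pseudopure p ψ x y‖ else 0) =
      if x ≠ y then p / Fintype.card n else 0 := fun x y => by
    split_ifs with hxy
    · exact norm_pseudopure_apply_of_ne hp hψ hxy
    · rfl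
  simp_rw [l1Coherence, hterm, ← Finset.sum_filter, Finset.filter_ne, Finset.sum_const,
    Finset.card_erase_of_mem (Finset.mem_univ _), Finset.card_univ, nsmul_eq_mul,
    Nat.cast_pred Fintype.card_pos, Finset.sum_const, Finset.card_univ, nsmul_eq_mul]
  field_simp

theorem robustness_pseudopure_general {d : ℕ} (hd : 0 < d) (p : ℝ) (hp0 : 0 ≤ p)
    (θ : Fin d → ℝ) :
    let ψ : Fin d → ℂ := fun x => Complex.exp ((θ x : ℂ) * Complex.I) / (Real.sqrt d : ℂ)
    let ρs : Matrix (Fin d) (Fin d) ℂ :=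
      (p : ℂ) • Matrix.of (fun x y => ψ x * star (ψ y)) +
        ((1 - p : ℝ) : ℂ) • ((d : ℂ)⁻¹ • (1 : Matrix (Fin d) (Fin d) ℂ))
    IsGreatest {s : ℝ | ∃ X : Matrix (Fin d) (Fin d) ℂ,
        X.PosSemidef ∧ (∀ x, X x x = 1) ∧ (s : ℂ) = (ρs * X).trace - 1}
      (p * (d - 1)) ∧
    (∑ x, ∑ y, if x ≠ y then ‖ρs x y‖ else 0) = p * (d - 1) := by
  intro ψ ρs
  have : Nonempty (Fin d) := Fin.pos_iff_nonempty.mp hd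
  have hψ : IsMaximallyCoherent ψ := fun x => by
    simp [ψ, Complex.norm_exp_ofReal_mul_I]
  have hρ : ρs = pseudopure p ψ := by
    simp only [ρs, pseudopure, Fintype.card_fin]
    rfl
  rw [hρ]
  have hR := isGreatest_robustness_pseudopure hp0 hψ
  have hC := l1Coherence_pseudopure hp0 hψ
  rw [Fintype.card_fin] at hR hC
  exact ⟨hR, hC⟩

/-- For the pseudopure state `ρ_s = p |ψ_max⟩⟨ψ_max| + (1−p) I/d` built from a maximally
coherent state `|ψ_max⟩ = (1/√d) Σ_x e^{iθ_x}|x⟩` and `0 ≤ p ≤ 1`, the robustness of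
coherence (in SDP form) equals the `ℓ1`-norm of coherence: both are `p(d−1)`. -/
theorem robustness_pseudopure {d : ℕ} (hd : 0 < d) (p : ℝ) (hp0 : 0 ≤ p) (hp1 : p ≤ 1)
    (θ : Fin d → ℝ) :
    let ψ : Fin d → ℂ := fun x => Complex.exp ((θ x : ℂ) * Complex.I) / (Real.sqrt d : ℂ)
    let ρs : Matrix (Fin d) (Fin d) ℂ :=
      (p : ℂ) • Matrix.of (fun x y => ψ x * star (ψ y)) +
        ((1 - p : ℝ) : ℂ) • ((d : ℂ)⁻¹ • (1 : Matrix (Fin d) (Fin d) ℂ))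
    IsGreatest {s : ℝ | ∃ X : Matrix (Fin d) (Fin d) ℂ,
        X.PosSemidef ∧ (∀ x, X x x = 1) ∧ (s : ℂ) = (ρs * X).trace - 1}
      (p * (d - 1)) ∧
    (∑ x, ∑ y, if x ≠ y then ‖ρs x y‖ else 0) = p * (d - 1) :=
  robustness_pseudopure_general hd p hp0 θ
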